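/- Let X ∈ ℝ^{m×n} have nonzero, pairwise orthogonal columns (so XᵀX is a diagonal matrix with strictly positive diagonal entries). Then the AOL preconditioning is exact: with s_i = (Σ_{j=1}^{n} |(XᵀX)_{ij}|)^{−1/2} and S = diag(s), the matrix X·S has orthonormal columns, i.e., (X·S)ᵀ(X·S) = I, and X·S = PolarFactor(X). -/

import Mathlib

open Matrix
open scoped Matrix.Norms.L2Operator

/-- The spectral norm (`ℓ2 → ℓ2` operator norm) of a real matrix, i.e. its largest
singular value.  This is Mathlib's scoped L2 operator norm on matrices. -/
noncomputable def matrixSpectralNorm {m n : ℕ} (M : Matrix (Fin m) (Fin n) ℝ) : ℝ := ‖M‖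

open Classical in
/-- The unique symmetric positive semidefinite square root of a positive semidefinite
real matrix (junk value `0` if the input is not positive semidefinite). -/
noncomputable def matrixSqrt {n : ℕ} (A : Matrix (Fin n) (Fin n) ℝ) :
    Matrix (Fin n) (Fin n) ℝ :=
  if h : A.PosSemidef then
    h.1.eigenvectorUnitary.1 * diagonal ((↑) ∘ (Real.sqrt ·) ∘ h.1.eigenvalues) *
      (star h.1.eigenvectorUnitary : Matrix (Fin n) (Fin n) ℝ)
  else 0

/-- The polar factor `X (XᵀX)^{-1/2}` of a matrix `X` with full column rank. -/
noncomputable def polarFactor {m n : ℕ} (X : Matrix (Fin m) (Fin n) ℝ) :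
    Matrix (Fin m) (Fin n) ℝ :=
  X * (matrixSqrt (Xᵀ * X))⁻¹

/-- The Frobenius inner product `⟨A, B⟩_F = tr(Aᵀ B)`. -/
noncomputable def frobInner {m n : ℕ} (A B : Matrix (Fin m) (Fin n) ℝ) : ℝ :=
  (Aᵀ * B).trace

/-!
Orthogonality of the columns makes the Gram matrix `XᵀX = D` diagonal with positive entries, so
the AOL row sums are the diagonal entries themselves and `S = D^{-1/2}`. Hence
`(XS)ᵀ(XS) = S D S = 1`. The square root of a nonnegative diagonal matrix is the entrywise square
root (by uniqueness of the continuous functional calculus square root), so `(XᵀX)^{-1/2} = S` too.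
-/

open scoped MatrixOrder in
theorem matrixSqrt_eq_cfcSqrt {n : ℕ} {A : Matrix (Fin n) (Fin n) ℝ} (hA : A.PosSemidef) :
    matrixSqrt A = CFC.sqrt A := by
  rw [CFC.sqrt_eq_real_sqrt A hA.nonneg, cfcₙ_eq_cfc, hA.1.cfc_eq, matrixSqrt, dif_pos hA]
  simp only [IsHermitian.cfc, RCLike.ofReal_real_eq_id, CompTriple.comp_eq,
    Unitary.conjStarAlgAut_apply]
  rfl

open scoped MatrixOrder in
theorem matrixSqrt_diagonal {n : ℕ} {d : Fin n → ℝ} (hd : 0 ≤ d) :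
    matrixSqrt (diagonal d) = diagonal fun i => √(d i) := by
  rw [matrixSqrt_eq_cfcSqrt (posSemidef_diagonal_iff.mpr hd)]
  refine CFC.sqrt_unique ?_ (posSemidef_diagonal_iff.mpr fun i => Real.sqrt_nonneg _).nonneg
  simp only [diagonal_mul_diagonal, Real.mul_self_sqrt (hd _)]

section Gram

variable {m n R : Type*} [Fintype m]

theorem isDiag_transpose_mul_self [NonUnitalNonAssocSemiring R] {X : Matrix m n R}
    (horth : ∀ j k : n, j ≠ k → ∑ i, X i j * X i k = 0) : (Xᵀ * X).IsDiag :=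
  horth

theorem transpose_mul_self_apply_self_pos [Ring R] [LinearOrder R] [IsStrictOrderedRing R]
    {X : Matrix m n R} {j : n} (hcol : (fun i => X i j) ≠ 0) : 0 < (Xᵀ * X) j j :=
  (Finset.sum_nonneg fun i _ => mul_self_nonneg (X i j)).lt_of_ne'
    (dotProduct_self_eq_zero.not.mpr hcol)

theorem transpose_mul_self_mul_diagonal [Fintype n] [DecidableEq n] [CommSemiring R]
    (X : Matrix m n R) (s : n → R) :
    (X * diagonal s)ᵀ * (X * diagonal s) = diagonal s * (Xᵀ * X) * diagonal s := by
  rw [transpose_mul, diagonal_transpose]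
  simp only [Matrix.mul_assoc]

end Gram

theorem Matrix.IsDiag.sum_abs_apply {n : Type*} [Fintype n] {A : Matrix n n ℝ} (hA : A.IsDiag)
    (i : n) :
    ∑ j, |A i j| = |A i i| :=
  Finset.sum_eq_single i (fun j _ hj => by rw [hA hj.symm, abs_zero]) (by simp)

theorem Real.rpow_neg_one_half {x : ℝ} (hx : 0 ≤ x) : x ^ (-(1 / 2 : ℝ)) = (√x)⁻¹ := by
  rw [Real.rpow_neg hx, Real.sqrt_eq_rpow]

section OrthogonalColumns

variable {m n : ℕ} {X : Matrix (Fin m) (Fin n) ℝ} {d : Fin n → ℝ}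

theorem polarFactor_eq_mul_diagonal_inv_sqrt (hG : Xᵀ * X = diagonal d) (hd : ∀ i, 0 < d i) :
    polarFactor X = X * diagonal fun i => (√(d i))⁻¹ := by
  rw [polarFactor, hG, matrixSqrt_diagonal fun i => (hd i).le]
  congr 1
  refine inv_eq_left_inv ?_
  rw [diagonal_mul_diagonal, ← diagonal_one]
  exact congrArg diagonal (funext fun i => inv_mul_cancel₀ (Real.sqrt_pos.mpr (hd i)).ne')

theorem transpose_mul_self_mul_diagonal_inv_sqrt (hG : Xᵀ * X = diagonal d)
    (hd : ∀ i, 0 < d i) :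
    (X * diagonal fun i => (√(d i))⁻¹)ᵀ * (X * diagonal fun i => (√(d i))⁻¹) = 1 := by
  rw [transpose_mul_self_mul_diagonal, hG, diagonal_mul_diagonal, diagonal_mul_diagonal,
    ← diagonal_one]
  congr 1
  funext i
  have : √(d i) ≠ 0 := (Real.sqrt_pos.mpr (hd i)).ne'
  field_simp
  exact (Real.sq_sqrt (hd i).le).symm

end OrthogonalColumns

/-- On matrices with nonzero pairwise orthogonal columns, AOL preconditioning is exact:
`X·S` has orthonormal columns and equals the polar factor of `X`. -/
theorem stmt_8 {m n : ℕ} (X : Matrix (Fin m) (Fin n) ℝ)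
    (hcol : ∀ j : Fin n, (fun i => X i j) ≠ 0)
    (horth : ∀ j k : Fin n, j ≠ k → ∑ i, X i j * X i k = 0)
    (s : Fin n → ℝ) (hs : ∀ i, s i = (∑ j, |(Xᵀ * X) i j|) ^ (-(1 / 2 : ℝ))) :
    let S : Matrix (Fin n) (Fin n) ℝ := Matrix.diagonal s
    (X * S)ᵀ * (X * S) = 1 ∧ X * S = polarFactor X := by
  intro S
  have hdiag := isDiag_transpose_mul_self horth
  have hpos : ∀ j, 0 < (Xᵀ * X) j j := fun j => transpose_mul_self_apply_self_pos (hcol j)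
  have hS : s = fun i => (√((Xᵀ * X) i i))⁻¹ := funext fun i => by
    rw [hs i, hdiag.sum_abs_apply, abs_of_pos (hpos i), Real.rpow_neg_one_half (hpos i).le]
  have hG : Xᵀ * X = diagonal fun i => (Xᵀ * X) i i := hdiag.diagonal_diag.symm
  refine ⟨?_, ?_⟩
  · simpa only [S, hS] using transpose_mul_self_mul_diagonal_inv_sqrt hG hpos
  · simpa only [S, hS] using (polarFactor_eq_mul_diagonal_inv_sqrt hG hpos).symm
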